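/- arXiv:2006.00050 — 2 statements merged into one kernel-verified Lean document; each statement's English description precedes it below -/
import Mathlib

section
/- Let X be a topological space. The class u𝒮_n(X) is closed under uniform limits: if (f_m) ⊆ u𝒮_n(X) and f_m converges uniformly to f, then f ∈ u𝒮_n(X). -/
open Topology ENNReal Filter Set

/-- Oscillation of `f` at `x`: inf over neighbourhoods `O ∋ x` of `sup_{ξ∈O} ρ(f x, f ξ)`. -/
noncomputable def oscAt {X Y : Type*} [TopologicalSpace X] [PseudoMetricSpace Y]
    (f : X → Y) (x : X) : ℝ≥0∞ :=
  ⨅ O ∈ 𝓝 x, ⨆ ξ ∈ O, edist (f x) (f ξ)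

/-- Oscillation at `x` of the restriction of `f` to `D` (computed in the subspace `D`). -/
noncomputable def oscWithinAt {X Y : Type*} [TopologicalSpace X] [PseudoMetricSpace Y]
    (f : X → Y) (D : Set X) (x : X) : ℝ≥0∞ :=
  ⨅ O ∈ 𝓝[D] x, ⨆ ξ ∈ O, edist (f x) (f ξ)

/-- `DEps f ε = {x : ω_f(x) ≥ ε}`. -/
noncomputable def DEps {X : Type*} [TopologicalSpace X] (f : X → ℝ) (ε : ℝ) : Set X :=
  {x | ENNReal.ofReal ε ≤ oscAt f x}

/-- Iterated ε-oscillation sets: `DIter f ε n = D_f^{n*ε}` (with `DIter f ε 0 = X`). -/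
noncomputable def DIter {X : Type*} [TopologicalSpace X] (f : X → ℝ) (ε : ℝ) : ℕ → Set X
  | 0 => Set.univ
  | n + 1 => {x ∈ DIter f ε n | ENNReal.ofReal ε ≤ oscWithinAt f (DIter f ε n) x}

/-- The class `u𝒮_n(X)`. -/
def uS {X : Type*} [TopologicalSpace X] (n : ℕ) (f : X → ℝ) : Prop :=
  ∀ ε : ℝ, 0 < ε → DIter f ε (n + 1) = ∅

/-- Iterated closed discontinuity sets `D_f^{n*0}` (with `DIter0 f 0 = X`). -/
def DIter0 {X : Type*} [TopologicalSpace X] (f : X → ℝ) : ℕ → Set X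
  | 0 => Set.univ
  | n + 1 => closure {x ∈ DIter0 f n | ¬ ContinuousWithinAt f (DIter0 f n) x}

/-- The class `𝒮_n(X)`. -/
def SClass {X : Type*} [TopologicalSpace X] (n : ℕ) (f : X → ℝ) : Prop :=
  DIter0 f (n + 1) = ∅

/-- `f` is `B₁**` : the restriction of `f` to its set of discontinuity points is continuous. -/
def B1ss {X Y : Type*} [TopologicalSpace X] [PseudoMetricSpace Y] (f : X → Y) : Prop :=
  ∀ x ∈ {x | ¬ ContinuousAt f x}, ContinuousWithinAt f {x | ¬ ContinuousAt f x} x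

lemma oscWithinAt_mono {X : Type*} [TopologicalSpace X] (g : X → ℝ) {D D' : Set X}
    (h : D ⊆ D') (x : X) : oscWithinAt g D x ≤ oscWithinAt g D' x := by
  refine le_iInf₂ fun O hO => iInf₂_le O (nhdsWithin_mono x h hO)

lemma osc_transfer {X : Type*} [TopologicalSpace X] {f g : X → ℝ} {δ : ℝ}
    (hδ : 0 ≤ δ) (hfg : ∀ y, edist (f y) (g y) ≤ ENNReal.ofReal δ) {D : Set X} {x : X} {ε : ℝ}
    (hx : ENNReal.ofReal ε ≤ oscWithinAt f D x) :
    ENNReal.ofReal (ε - 2 * δ) ≤ oscWithinAt g D x := by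
  refine le_iInf₂ fun O hO => ?_
  have h1 : ENNReal.ofReal ε ≤ ⨆ ξ ∈ O, edist (f x) (f ξ) :=
    hx.trans (iInf₂_le O hO)
  have h2 : (⨆ ξ ∈ O, edist (f x) (f ξ)) ≤
      (⨆ ξ ∈ O, edist (g x) (g ξ)) + ENNReal.ofReal (2 * δ) := by
    refine iSup₂_le fun ξ hξ => ?_
    have := (edist_triangle4 (f x) (g x) (g ξ) (f ξ))
    refine this.trans ?_
    have h3 : edist (g x) (g ξ) ≤ ⨆ ξ ∈ O, edist (g x) (g ξ) := le_iSup₂ (f := fun ξ _ => edist (g x) (g ξ)) ξ hξ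
    have h4 : edist (g ξ) (f ξ) = edist (f ξ) (g ξ) := edist_comm _ _
    calc edist (f x) (g x) + edist (g x) (g ξ) + edist (g ξ) (f ξ)
        ≤ ENNReal.ofReal δ + (⨆ ξ ∈ O, edist (g x) (g ξ)) + ENNReal.ofReal δ := by
          gcongr
          · exact hfg x
          · rw [h4]; exact hfg ξ
      _ = (⨆ ξ ∈ O, edist (g x) (g ξ)) + ENNReal.ofReal (2 * δ) := by
          rcases le_or_gt δ 0 with h | h
          · simp [ENNReal.ofReal_of_nonpos h, ENNReal.ofReal_of_nonpos (by linarith : 2 * δ ≤ 0)]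
          · rw [two_mul, ENNReal.ofReal_add h.le h.le]; ring
  have h5 : ENNReal.ofReal ε ≤ (⨆ ξ ∈ O, edist (g x) (g ξ)) + ENNReal.ofReal (2 * δ) :=
    h1.trans h2
  have h6 : ENNReal.ofReal ε - ENNReal.ofReal (2 * δ) ≤ ⨆ ξ ∈ O, edist (g x) (g ξ) :=
    tsub_le_iff_right.mpr h5
  calc ENNReal.ofReal (ε - 2 * δ) ≤ ENNReal.ofReal ε - ENNReal.ofReal (2 * δ) := by
        rw [ENNReal.ofReal_sub _ (by positivity)]
    _ ≤ _ := h6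

lemma DIter_transfer {X : Type*} [TopologicalSpace X] {f g : X → ℝ} {δ ε : ℝ} (hδ : 0 ≤ δ)
    (hfg : ∀ y, edist (f y) (g y) ≤ ENNReal.ofReal δ) :
    ∀ k, DIter f ε k ⊆ DIter g (ε - 2 * δ) k := by
  intro k
  induction k with
  | zero => exact subset_rfl
  | succ k ih =>
    rintro x ⟨hmem, hosc⟩
    refine ⟨ih hmem, ?_⟩
    exact (osc_transfer hδ hfg hosc).trans (oscWithinAt_mono g ih x)

theorem stmt_13 {X : Type*} [TopologicalSpace X] (n : ℕ) (F : ℕ → X → ℝ) (f : X → ℝ)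
    (hF : ∀ m, uS n (F m)) (hu : TendstoUniformly F f atTop) : uS n f := by
  intro ε hε
  have hδ : (0:ℝ) < ε / 4 := by linarith
  obtain ⟨m, hm⟩ := ((Metric.tendstoUniformly_iff.mp hu) (ε / 4) hδ).exists
  have hfg : ∀ y, edist (f y) (F m y) ≤ ENNReal.ofReal (ε / 4) := by
    intro y
    rw [edist_dist]
    exact ENNReal.ofReal_le_ofReal (hm y).le
  have hsub := DIter_transfer (g := F m) (ε := ε) hδ.le hfg (n + 1)
  have : ε - 2 * (ε / 4) = ε / 2 := by ring
  rw [this] at hsub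
  rw [hF m (ε / 2) (by linarith)] at hsub
  exact Set.subset_empty_iff.mp hsub
end

section
/- Let X be a topological space and f : X → ℝ. Then f satisfies condition (⋆) — for every ε > 0 the restriction of f to D_f^ε = {x : ω_f(x) ≥ ε} is continuous — if and only if for all ε₁, ε₂ > 0 the set D_f^{ε₁,ε₂} is empty, i.e., f ∈ u𝒮₁(X). -/
open Topology ENNReal Filter Set

/-! A function is continuous within `D` at `x` exactly when its oscillation within `D` at `x`
vanishes, so both conditions say that `oscWithinAt f (DEps f ε) x = 0` on every `DEps f ε`. -/

section Oscillation

variable {X Y : Type*} [TopologicalSpace X] [PseudoMetricSpace Y] {f : X → Y} {D : Set X} {x : X}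

lemma oscWithinAt_le_of_eventually {ε : ℝ≥0∞}
    (h : ∀ᶠ ξ in 𝓝[D] x, edist (f x) (f ξ) ≤ ε) : oscWithinAt f D x ≤ ε :=
  iInf₂_le_of_le _ h (iSup₂_le fun _ hξ => hξ)

lemma eventually_edist_lt_of_oscWithinAt_lt {ε : ℝ≥0∞} (h : oscWithinAt f D x < ε) :
    ∀ᶠ ξ in 𝓝[D] x, edist (f x) (f ξ) < ε := by
  obtain ⟨O, hO, hlt⟩ : ∃ O ∈ 𝓝[D] x, ⨆ ξ ∈ O, edist (f x) (f ξ) < ε := by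
    simpa only [oscWithinAt, iInf_lt_iff, exists_prop] using h
  filter_upwards [hO] with ξ hξ
  exact (le_iSup₂ (f := fun ξ (_ : ξ ∈ O) => edist (f x) (f ξ)) ξ hξ).trans_lt hlt

theorem continuousWithinAt_iff_forall_oscWithinAt_lt :
    ContinuousWithinAt f D x ↔ ∀ ε : ℝ, 0 < ε → oscWithinAt f D x < ENNReal.ofReal ε := by
  rw [ContinuousWithinAt, Metric.tendsto_nhds]
  refine ⟨fun h ε hε => ?_, fun h ε hε => ?_⟩
  · have hclose := h (ε / 2) (half_pos hε)
    calc oscWithinAt f D x ≤ ENNReal.ofReal (ε / 2) :=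
          oscWithinAt_le_of_eventually <| hclose.mono fun ξ hξ => by
            rw [edist_dist, dist_comm]; exact ENNReal.ofReal_le_ofReal hξ.le
      _ < ENNReal.ofReal ε := (ENNReal.ofReal_lt_ofReal_iff hε).2 (half_lt_self hε)
  · filter_upwards [eventually_edist_lt_of_oscWithinAt_lt (h ε hε)] with ξ hξ
    rwa [edist_lt_ofReal, dist_comm] at hξ

end Oscillation

theorem stmt_18 {X : Type*} [TopologicalSpace X] (f : X → ℝ) :
    (∀ ε : ℝ, 0 < ε → ∀ x ∈ DEps f ε, ContinuousWithinAt f (DEps f ε) x) ↔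
      (∀ ε₁ ε₂ : ℝ, 0 < ε₁ → 0 < ε₂ →
        {x ∈ DEps f ε₁ | ENNReal.ofReal ε₂ ≤ oscWithinAt f (DEps f ε₁) x} = ∅) := by
  simp only [continuousWithinAt_iff_forall_oscWithinAt_lt, eq_empty_iff_forall_notMem]
  refine ⟨fun h ε₁ ε₂ hε₁ hε₂ x ⟨hx, hle⟩ => hle.not_gt (h ε₁ hε₁ x hx ε₂ hε₂),
    fun h ε hε x hx ε₂ hε₂ => not_le.1 fun hle => h ε ε₂ hε hε₂ x ⟨hx, hle⟩⟩
end
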